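/- Let Σ ⊆ ℝ² be open, z ∈ Σ, and let α : (−1,1) → Σ be a curve differentiable at 0 with α(0) = z and α′(0) ≠ 0. Let (t_n) be a sequence of nonzero real numbers with t_n → 0, and set x_n = α(t_n); assume x_n ≠ z for all n. Then there exists λ ∈ ℝ, depending only on the sequence (t_n) and on α, such that every map P : Σ → ℝ² that is differentiable at z and satisfies P(z) = z and P(x_n) = x_{n+1} for all n verifies DP(z)(α′(0)) = λ · α′(0). -/

import Mathlib

open Set Filter Topology

/-
If `P` fixes `z = α 0` and maps `α (t n)` to `α (t (n+1))`, then the difference quotients of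
`P ∘ α` along `t` are `(t (n+1) / t n) • slope α 0 (t (n+1))`. They tend to `DP(z) v`, while
`slope α 0 (t (n+1))` tends to `v ≠ 0`; hence the ratios `t (n+1) / t n` converge, to a limit `λ`
determined by `t` alone, and `DP(z) v = λ • v`.
-/

theorem HasDerivAt.tendsto_slope_comp {E : Type*} [NormedAddCommGroup E] [NormedSpace ℝ E]
    {ι : Type*} {l : Filter ι} {f : ℝ → E} {f' : E} {x : ℝ} (hf : HasDerivAt f f' x)
    {t : ι → ℝ} (ht : Tendsto t l (𝓝 x)) (htx : ∀ i, t i ≠ x) :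
    Tendsto (fun i => slope f x (t i)) l (𝓝 f') :=
  (hasDerivAt_iff_tendsto_slope.mp hf).comp
    (tendsto_nhdsWithin_of_tendsto_nhds_of_eventually_within _ ht (Eventually.of_forall htx))

theorem exists_tendsto_of_tendsto_smul {𝕜 E ι : Type*} [RCLike 𝕜] [NormedAddCommGroup E]
    [NormedSpace 𝕜 E] {l : Filter ι} [l.NeBot] {c : ι → 𝕜} {u : ι → E} {v w : E}
    (hu : Tendsto u l (𝓝 v)) (hv : v ≠ 0) (hcu : Tendsto (fun i => c i • u i) l (𝓝 w)) :
    ∃ L, Tendsto c l (𝓝 L) ∧ w = L • v := by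
  obtain ⟨g, -, hgv⟩ := exists_dual_vector 𝕜 v (norm_ne_zero_iff.mpr hv)
  set f : E →L[𝕜] 𝕜 := (‖v‖ : 𝕜)⁻¹ • g
  have hfv : f v = 1 := by
    simp [f, hgv, inv_mul_cancel₀ (by simpa using hv : (‖v‖ : 𝕜) ≠ 0)]
  have hfu : Tendsto (fun i => f (u i)) l (𝓝 1) := hfv ▸ (f.continuous.tendsto v).comp hu
  have hfcu : Tendsto (fun i => c i * f (u i)) l (𝓝 (f w)) := by
    simpa [Function.comp_def] using (f.continuous.tendsto w).comp hcu
  have hc : Tendsto c l (𝓝 (f w)) := by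
    refine (div_one (f w) ▸ hfcu.div hfu one_ne_zero).congr' ?_
    filter_upwards [hfu.eventually_ne one_ne_zero] with i hi
    exact mul_div_cancel_right₀ (c i) hi
  exact ⟨f w, hc, tendsto_nhds_unique hcu (hc.smul hu)⟩

theorem eigenvalue_from_monotone_sequence_general
    (z : ℝ × ℝ)
    (α : ℝ → ℝ × ℝ) (v : ℝ × ℝ)
    (hα : HasDerivAt α v 0) (hα0 : α 0 = z) (hv : v ≠ 0)
    (t : ℕ → ℝ) (ht0 : ∀ n, t n ≠ 0)
    (ht : Tendsto t atTop (nhds 0)) :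
    ∃ lam : ℝ, ∀ (P : ℝ × ℝ → ℝ × ℝ) (P' : (ℝ × ℝ) →L[ℝ] ℝ × ℝ),
      HasFDerivAt P P' z → P z = z → (∀ n, P (α (t n)) = α (t (n + 1))) →
      P' v = lam • v := by
  refine ⟨limUnder atTop fun n => t (n + 1) / t n, fun P P' hP hPz hPα => ?_⟩
  have hslope_α : Tendsto (fun n => slope α 0 (t (n + 1))) atTop (𝓝 v) :=
    (hα.tendsto_slope_comp ht ht0).comp (tendsto_add_atTop_nat 1)
  have hslope_Pα : Tendsto (fun n => slope (P ∘ α) 0 (t n)) atTop (𝓝 (P' v)) :=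
    ((hα0 ▸ hP).comp_hasDerivAt 0 hα).tendsto_slope_comp ht ht0
  have hquot : ∀ n, slope (P ∘ α) 0 (t n) = (t (n + 1) / t n) • slope α 0 (t (n + 1)) := by
    intro n
    simp only [slope_def_module, Function.comp, sub_zero, hα0, hPz, hPα, smul_smul]
    rw [div_mul_eq_mul_div, mul_inv_cancel₀ (ht0 (n + 1)), one_div]
  obtain ⟨L, hL, hP'v⟩ :=
    exists_tendsto_of_tendsto_smul hslope_α hv (hslope_Pα.congr hquot)
  rw [hL.limUnder_eq, hP'v]

/-- **Invariant subspaces for derivatives of holonomy maps, item 2.**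
Given a curve `α` through `z` differentiable at `0` with `α′(0) ≠ 0` and a sequence of
nonzero parameters `t n → 0` with `x n = α (t n) ≠ z`, there is `λ ∈ ℝ`, depending only
on the sequence and the curve, such that every `P` differentiable at `z` with `P z = z`
and `P (x n) = x (n+1)` for all `n` satisfies `DP(z)(α′(0)) = λ • α′(0)`. -/
theorem eigenvalue_from_monotone_sequence
    (S : Set (ℝ × ℝ)) (hS : IsOpen S) (z : ℝ × ℝ) (hz : z ∈ S)
    (α : ℝ → ℝ × ℝ) (v : ℝ × ℝ)
    (hα : HasDerivAt α v 0) (hα0 : α 0 = z) (hv : v ≠ 0)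
    (hαS : ∀ s ∈ Set.Ioo (-1 : ℝ) 1, α s ∈ S)
    (t : ℕ → ℝ) (ht0 : ∀ n, t n ≠ 0) (htI : ∀ n, t n ∈ Set.Ioo (-1 : ℝ) 1)
    (ht : Tendsto t atTop (nhds 0))
    (hne : ∀ n, α (t n) ≠ z) :
    ∃ lam : ℝ, ∀ (P : ℝ × ℝ → ℝ × ℝ) (P' : (ℝ × ℝ) →L[ℝ] ℝ × ℝ),
      HasFDerivAt P P' z → P z = z → (∀ n, P (α (t n)) = α (t (n + 1))) →
      P' v = lam • v :=
  eigenvalue_from_monotone_sequence_general z α v hα hα0 hv t ht0 ht
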